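/- arXiv:quant-ph/9906054 — 6 statements merged into one kernel-verified Lean document; each statement's English description precedes it below -/
import Mathlib

section
/- The matrix σ_z^{1/4} = [[1,0],[0,e^{iπ/4}]] cannot be written in the form (√2)^{−ℓ}·M for any natural number ℓ and any 2×2 matrix M all of whose entries are Gaussian integers. (Consequently, σ_z^{1/4} cannot be implemented exactly by any circuit over Shor's basis, so Shor's basis and the basis {H, σ_z^{1/4}, CNOT} are not equivalent.) -/
open Matrix

/-- The matrix `σ_z^{1/4}` cannot be written as `(√2)^{-ℓ} M` with `M` a matrix of
Gaussian integers; hence it is not exactly implementable over Shor's basis. -/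
theorem stmt4 :
    ¬ ∃ (ℓ : ℕ) (M : Matrix (Fin 2) (Fin 2) ℂ),
      (∀ i j, ∃ a b : ℤ, M i j = (a : ℂ) + (b : ℂ) * Complex.I) ∧
      !![1, 0; 0, Complex.exp (↑Real.pi * Complex.I / 4)] =
        ((Real.sqrt 2 : ℂ)⁻¹) ^ ℓ • M := by
  rintro ⟨ℓ, M, hGI, hEq⟩
  obtain ⟨a0, b0, h0⟩ := hGI 0 0
  obtain ⟨a, b, h1⟩ := hGI 1 1
  have h00 := congrFun (congrFun hEq 0) 0
  have h11 := congrFun (congrFun hEq 1) 1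
  simp [Matrix.smul_apply, h0, h1] at h00 h11
  -- rewrite exp
  have hexp : Complex.exp (↑Real.pi * Complex.I / 4)
      = ((Real.cos (Real.pi / 4) : ℝ) : ℂ) + ((Real.sin (Real.pi / 4) : ℝ) : ℂ) * Complex.I := by
    rw [Complex.ofReal_cos, Complex.ofReal_sin, ← Complex.exp_mul_I]
    push_cast
    ring_nf
  rw [hexp] at h11
  set r : ℝ := (Real.sqrt 2)⁻¹ ^ ℓ with hr
  have hrc : (((Real.sqrt 2 : ℂ)) ^ ℓ)⁻¹ = (r : ℂ) := by push_cast [hr]; rw [inv_pow]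
  rw [hrc] at h00 h11
  have h00re : (1 : ℝ) = r * a0 := by
    have := congrArg Complex.re h00
    simpa using this
  have h11re : Real.cos (Real.pi / 4) = r * a := by
    have := congrArg Complex.re h11
    simpa using this
  rw [Real.cos_pi_div_four] at h11re
  have ha0 : (a0 : ℝ) ≠ 0 := by
    rintro h; rw [h] at h00re; simp at h00re
  have key : Real.sqrt 2 * a0 = 2 * a := by
    linear_combination (2 * (a0 : ℝ)) * h11re - (2 * (a : ℝ)) * h00re
  have hsqrt : Real.sqrt 2 = (2 * a) / a0 := by
    field_simp
    linarith [key]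
  have : Irrational (Real.sqrt 2) := irrational_sqrt_two
  apply this
  refine ⟨(2 * a) / a0, ?_⟩
  rw [hsqrt]
  push_cast
  ring
end

section
/- Let λ be a real number with cos(πλ) = cos²(π/8) = (1/2)(1 + 1/√2). Then λ is irrational. -/
open Real

/-- `x = 1 + 1/√2` satisfies `x² - 2x = -1/2`, and a rational algebraic integer lies in `ℤ`. -/
theorem Real.not_isIntegral_one_add_inv_sqrt_two : ¬ IsIntegral ℤ (1 + (√2)⁻¹) := by
  set x : ℝ := 1 + (√2)⁻¹
  intro hx
  have hquad : x ^ 2 - 2 * x = ((-1 / 2 : ℚ) : ℝ) := by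
    have hsq : ((√2)⁻¹) ^ 2 = (1 / 2 : ℝ) := by
      rw [inv_pow, sq_sqrt zero_le_two, one_div]
    push_cast
    linear_combination hsq
  have hint : IsIntegral ℤ (x ^ 2 - 2 * x) :=
    (hx.pow 2).sub ((isIntegral_algebraMap (x := (2 : ℤ))).mul hx)
  obtain ⟨k, hk⟩ := hint.exists_int_iff_exists_rat.mp ⟨_, hquad⟩
  have hk_real : (2 * k : ℝ) = -1 := by linarith
  have hk_int : 2 * k = -1 := by exact_mod_cast hk_real
  omega

/-- If `cos(πλ) = (1/2)(1 + 1/√2) = cos²(π/8)`, then `λ` is irrational. -/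
theorem stmt7 (l : ℝ)
    (hl : Real.cos (Real.pi * l) = (1 / 2) * (1 + 1 / Real.sqrt 2)) :
    Irrational l := by
  rintro ⟨q, rfl⟩
  have h2cos := isIntegral_two_mul_cos_rat_mul_pi q
  rw [mul_comm (q : ℝ), hl, ← mul_assoc, mul_one_div_cancel two_ne_zero, one_mul,
    one_div] at h2cos
  exact not_isIntegral_one_add_inv_sqrt_two h2cos
end

section
/- Neither of the complex numbers α = (1 + 2i)/√5 and β = (1 + 3i)/√10 is a root of unity; that is, there is no positive integer n with αⁿ = 1, and no positive integer n with βⁿ = 1. -/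
lemma h5zero : (5 : ZMod 5) = 0 := by decide

lemma aux1 : ∀ n : ℕ, ∃ a b : ℤ, (1 + 2*Complex.I)^(n+1) = a + b*Complex.I ∧
    (a : ZMod 5) = 3*2^(n+1) ∧ (b : ZMod 5) = 2^(n+1) := by
  intro n
  induction n with
  | zero => exact ⟨1, 2, by push_cast; ring, by decide, by decide⟩
  | succ m ih =>
    obtain ⟨a, b, h, ha, hb⟩ := ih
    refine ⟨a - 2*b, 2*a + b, ?_, ?_, ?_⟩
    · rw [pow_succ, h]; push_cast
      linear_combination (2*(b:ℂ)) * Complex.I_sq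
    · push_cast
      linear_combination ha - 2*hb - (2:ZMod 5)^(m+1) * h5zero
    · push_cast
      linear_combination 2*ha + hb + (2:ZMod 5)^(m+1) * h5zero

lemma aux2 : ∀ n : ℕ, ∃ a b : ℤ, (1 + 3*Complex.I)^(n+1) = a + b*Complex.I ∧
    (a : ZMod 5) = 3*2^(n+1) ∧ (b : ZMod 5) = -2^(n+1) := by
  intro n
  induction n with
  | zero => exact ⟨1, 3, by push_cast; ring, by decide, by decide⟩
  | succ m ih =>
    obtain ⟨a, b, h, ha, hb⟩ := ih
    refine ⟨a - 3*b, 3*a + b, ?_, ?_, ?_⟩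
    · rw [pow_succ, h]; push_cast
      linear_combination (3*(b:ℂ)) * Complex.I_sq
    · push_cast
      linear_combination ha - 3*hb
    · push_cast
      linear_combination 3*ha + hb + 2*(2:ZMod 5)^(m+1) * h5zero

lemma key (z : ℂ) (r : ℝ) (hr : 0 < r) (n : ℕ)
    (h : (z / (Real.sqrt r : ℂ)) ^ n = 1) : z ^ n = ((Real.sqrt r ^ n : ℝ) : ℂ) := by
  have h5 : ((Real.sqrt r : ℝ) : ℂ) ≠ 0 := by
    simp [Complex.ofReal_ne_zero, (Real.sqrt_pos.mpr hr).ne']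
  rw [div_pow, div_eq_one_iff_eq (pow_ne_zero _ h5)] at h
  rw [h]; push_cast; ring

/-- Neither `(1+2i)/√5` nor `(1+3i)/√10` is a root of unity. -/
theorem stmt9 :
    (¬ ∃ n : ℕ, 0 < n ∧ ((1 + 2 * Complex.I) / ↑(Real.sqrt 5)) ^ n = 1) ∧
    (¬ ∃ n : ℕ, 0 < n ∧ ((1 + 3 * Complex.I) / ↑(Real.sqrt 10)) ^ n = 1) := by
  have h2 : (2 : ZMod 5) ≠ 0 := by decide
  haveI : Fact (Nat.Prime 5) := ⟨by norm_num⟩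
  constructor
  · rintro ⟨n, hn, h⟩
    obtain ⟨m, rfl⟩ := Nat.exists_eq_succ_of_ne_zero hn.ne'
    obtain ⟨a, b, hab, ha, hb⟩ := aux1 m
    have hk := key _ 5 (by norm_num) (m+1) h
    rw [hab] at hk
    have hb0 : b = 0 := by
      have := congrArg Complex.im hk
      simp at this
      exact_mod_cast this
    rw [hb0] at hb
    exact pow_ne_zero _ h2 (by exact_mod_cast hb.symm)
  · rintro ⟨n, hn, h⟩
    obtain ⟨m, rfl⟩ := Nat.exists_eq_succ_of_ne_zero hn.ne'
    obtain ⟨a, b, hab, ha, hb⟩ := aux2 m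
    have hk := key _ 10 (by norm_num) (m+1) h
    rw [hab] at hk
    have hb0 : b = 0 := by
      have := congrArg Complex.im hk
      simp at this
      exact_mod_cast this
    rw [hb0] at hb
    exact pow_ne_zero _ h2 (neg_eq_zero.mp (by exact_mod_cast hb.symm))
end

section
/- Let n₁ and n₂ be unit vectors in ℝ³ with n₁·n₂ = 0, and for a vector v = (v_x, v_y, v_z) ∈ ℝ³ write v·σ⃗ for the 2×2 complex matrix v_x σ_x + v_y σ_y + v_z σ_z. Then for every 2×2 complex unitary matrix U with det U = 1 there exist real numbers α, β, γ such that U = exp(iα (n₁·σ⃗)) · exp(iβ (n₂·σ⃗)) · exp(iγ (n₁·σ⃗)), where exp denotes the matrix exponential. (Generalized Euler decomposition of SU(2) about two orthogonal axes.) -/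
open Matrix

noncomputable def pauliX : Matrix (Fin 2) (Fin 2) ℂ := !![0, 1; 1, 0]
noncomputable def pauliY : Matrix (Fin 2) (Fin 2) ℂ := !![0, -Complex.I; Complex.I, 0]
noncomputable def pauliZ : Matrix (Fin 2) (Fin 2) ℂ := !![1, 0; 0, -1]

/-- For `v ∈ ℝ³`, the matrix `v·σ⃗ = v_x σ_x + v_y σ_y + v_z σ_z`. -/
noncomputable def dotPauli (v : Fin 3 → ℝ) : Matrix (Fin 2) (Fin 2) ℂ :=
  (v 0 : ℂ) • pauliX + (v 1 : ℂ) • pauliY + (v 2 : ℂ) • pauliZ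

/-!
Put `A = n₁·σ⃗` and `B = n₂·σ⃗`. Then `A² = B² = 1`, so `exp (iθA) = cos θ + i sin θ A`, and
`AB = -BA`, so `B exp (iγA) = exp (-iγA) B`. Hence
`exp (iαA) exp (iβB) exp (iγA) = cos β (cos θ + i sin θ A) + sin β (i cos φ B + sin φ AB)`
with `θ = α + γ`, `φ = γ - α`. Conversely every `U ∈ SU(2)` is `w + i m·σ⃗` with `w² + |m|² = 1`;
expanding `m` in the orthonormal frame `n₁, n₂, n₁ × n₂`, where `(n₁ × n₂)·σ⃗ = -iAB`, writes `U`
as `w + ixA + iyB + zAB` with `(w, x, y, z) ∈ S³`, and the Hopf coordinates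
`(w + ix, y + iz) = (cos β e^{iθ}, sin β e^{iφ})` of that point produce the angles.
-/

open Complex ComplexConjugate

section Involution

variable {𝔸 : Type*} [Ring 𝔸] [Algebra ℂ 𝔸] {A B : 𝔸}

theorem exp_I_mul_smul_of_mul_self_eq_one [TopologicalSpace 𝔸] [IsTopologicalRing 𝔸]
    [ContinuousSMul ℂ 𝔸] [T2Space 𝔸] (hA : A * A = 1) (t : ℝ) :
    NormedSpace.exp ((I * t) • A) = (Real.cos t : ℂ) • 1 + (I * Real.sin t) • A := by
  have hA2 : A ^ 2 = 1 := by rw [sq, hA]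
  have hI2 : (I * t) ^ 2 = -(t : ℂ) ^ 2 := by rw [mul_pow, I_sq]; ring
  rw [NormedSpace.exp_eq_tsum ℂ]
  refine HasSum.tsum_eq (HasSum.even_add_odd ?_ ?_)
  · convert (hasSum_cos (t : ℂ)).smul_const (1 : 𝔸) using 2 with k
    · rw [smul_pow, pow_mul A, hA2, one_pow, smul_smul, pow_mul, hI2, neg_pow, ← pow_mul]
      congr 1
      field_simp
    · push_cast; rfl
  · convert ((hasSum_sin (t : ℂ)).mul_left I).smul_const A using 2 with k
    · rw [smul_pow, pow_succ A, pow_mul A, hA2, one_pow, one_mul, smul_smul,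
        pow_succ, pow_mul, hI2, neg_pow, ← pow_mul]
      congr 1
      field_simp
      ring
    · push_cast; rfl

theorem cos_smul_add_sin_smul_mul (hA : A * A = 1) (s t : ℝ) :
    ((Real.cos s : ℂ) • 1 + (I * Real.sin s) • A) * ((Real.cos t : ℂ) • 1 + (I * Real.sin t) • A)
      = (Real.cos (s + t) : ℂ) • 1 + (I * Real.sin (s + t)) • A := by
  simp only [add_mul, mul_add, smul_mul_smul, mul_one, one_mul, hA, Real.cos_add, Real.sin_add]
  match_scalars
  · linear_combination (sin s * sin t : ℂ) * I_sq
  · ring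

theorem mul_cos_smul_add_sin_smul (hBA : B * A = -(A * B)) (t : ℝ) :
    B * ((Real.cos t : ℂ) • 1 + (I * Real.sin t) • A)
      = ((Real.cos (-t) : ℂ) • 1 + (I * Real.sin (-t)) • A) * B := by
  simp only [mul_add, add_mul, mul_smul_comm, smul_mul_assoc, mul_one, one_mul, hBA,
    Real.cos_neg, Real.sin_neg]
  match_scalars <;> ring

theorem euler_product_of_anticommute (hA : A * A = 1) (hBA : B * A = -(A * B)) (α β γ : ℝ) :
    ((Real.cos α : ℂ) • 1 + (I * Real.sin α) • A) * ((Real.cos β : ℂ) • 1 + (I * Real.sin β) • B)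
        * ((Real.cos γ : ℂ) • 1 + (I * Real.sin γ) • A)
      = ((Real.cos β * Real.cos (α + γ) : ℝ) : ℂ) • 1
        + (I * (Real.cos β * Real.sin (α + γ) : ℝ)) • A
        + (I * (Real.sin β * Real.cos (γ - α) : ℝ)) • B
        + ((Real.sin β * Real.sin (γ - α) : ℝ) : ℂ) • (A * B) := by
  set R : ℝ → 𝔸 := fun t => (Real.cos t : ℂ) • 1 + (I * Real.sin t) • A with hR
  calc R α * ((Real.cos β : ℂ) • 1 + (I * Real.sin β) • B) * R γ
      = (Real.cos β : ℂ) • (R α * R γ) + (I * Real.sin β) • (R α * (B * R γ)) := by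
        simp only [mul_add, add_mul, smul_mul_assoc, mul_smul_comm, mul_one, mul_assoc]
    _ = (Real.cos β : ℂ) • R (α + γ) + (I * Real.sin β) • (R (-(γ - α)) * B) := by
        rw [mul_cos_smul_add_sin_smul hBA, ← mul_assoc, cos_smul_add_sin_smul_mul hA,
          cos_smul_add_sin_smul_mul hA, neg_sub, sub_eq_add_neg]
    _ = _ := by
        simp only [hR, Real.cos_neg, Real.sin_neg, add_mul, smul_add, smul_smul, one_mul,
          smul_mul_assoc]
        match_scalars
        iterate 3 ring
        linear_combination -(sin β * sin (γ - α : ℂ)) * I_sq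

end Involution

section Frame

variable {R : Type*} [CommRing R]

theorem triple_product_smul (u v w m : Fin 3 → R) :
    (u ⬝ᵥ v ⨯₃ w) • m = (m ⬝ᵥ u) • v ⨯₃ w + (m ⬝ᵥ v) • w ⨯₃ u + (m ⬝ᵥ w) • u ⨯₃ v := by
  ext i
  fin_cases i <;> simp [cross_apply, dotProduct, Fin.sum_univ_three] <;> ring

variable {u v : Fin 3 → R}

theorem eq_add_add_of_orthonormal (hu : u ⬝ᵥ u = 1) (hv : v ⬝ᵥ v = 1) (huv : u ⬝ᵥ v = 0)
    (m : Fin 3 → R) :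
    m = (m ⬝ᵥ u) • u + (m ⬝ᵥ v) • v + (m ⬝ᵥ u ⨯₃ v) • u ⨯₃ v := by
  have hw : u ⨯₃ v ⬝ᵥ u ⨯₃ v = 1 := by
    rw [cross_dot_cross, hu, hv, huv]; ring
  have hvw : v ⨯₃ (u ⨯₃ v) = u := by
    rw [cross_cross_eq_smul_sub_smul', hv, huv]; simp
  have hwu : u ⨯₃ v ⨯₃ u = v := by
    rw [cross_cross_eq_smul_sub_smul, hu, dotProduct_comm, huv]; simp
  have := triple_product_smul u v (u ⨯₃ v) m
  rwa [← triple_product_permutation (u ⨯₃ v) u v, hw, one_smul, hvw, hwu] at this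

theorem dotProduct_self_eq_of_orthonormal (hu : u ⬝ᵥ u = 1) (hv : v ⬝ᵥ v = 1)
    (huv : u ⬝ᵥ v = 0) (m : Fin 3 → R) :
    m ⬝ᵥ m = (m ⬝ᵥ u) ^ 2 + (m ⬝ᵥ v) ^ 2 + (m ⬝ᵥ u ⨯₃ v) ^ 2 := by
  nth_rw 2 [eq_add_add_of_orthonormal hu hv huv m]
  simp only [dotProduct_add, dotProduct_smul, smul_eq_mul]
  ring

end Frame

theorem exists_mul_cos_eq_and_mul_sin_eq {r x y : ℝ} (hr : 0 ≤ r) (h : r ^ 2 = x ^ 2 + y ^ 2) :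
    ∃ θ : ℝ, r * Real.cos θ = x ∧ r * Real.sin θ = y := by
  have hnorm : ‖(⟨x, y⟩ : ℂ)‖ = r := by
    rw [norm_def, normSq_mk, ← sq, ← sq, ← h, Real.sqrt_sq hr]
  exact ⟨arg ⟨x, y⟩, hnorm ▸ norm_mul_cos_arg _, hnorm ▸ norm_mul_sin_arg _⟩

theorem exists_euler_angles {w x y z : ℝ} (h : w ^ 2 + x ^ 2 + y ^ 2 + z ^ 2 = 1) :
    ∃ α β γ : ℝ, w = Real.cos β * Real.cos (α + γ) ∧ x = Real.cos β * Real.sin (α + γ) ∧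
      y = Real.sin β * Real.cos (γ - α) ∧ z = Real.sin β * Real.sin (γ - α) := by
  obtain ⟨β, hcos, hsin⟩ := exists_mul_cos_eq_and_mul_sin_eq zero_le_one
    (x := √(w ^ 2 + x ^ 2)) (y := √(y ^ 2 + z ^ 2)) (by
      rw [Real.sq_sqrt (by positivity), Real.sq_sqrt (by positivity)]; linarith)
  rw [one_mul] at hcos hsin
  obtain ⟨θ, hw, hx⟩ := exists_mul_cos_eq_and_mul_sin_eq (hcos ▸ Real.sqrt_nonneg _)
    (x := w) (y := x) (by rw [hcos, Real.sq_sqrt (by positivity)])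
  obtain ⟨φ, hy, hz⟩ := exists_mul_cos_eq_and_mul_sin_eq (hsin ▸ Real.sqrt_nonneg _)
    (x := y) (y := z) (by rw [hsin, Real.sq_sqrt (by positivity)])
  refine ⟨(θ - φ) / 2, β, (θ + φ) / 2, ?_⟩
  rw [show (θ - φ) / 2 + (θ + φ) / 2 = θ by ring, show (θ + φ) / 2 - (θ - φ) / 2 = φ by ring]
  exact ⟨hw.symm, hx.symm, hy.symm, hz.symm⟩

theorem star_eq_adjugate_of_mem_unitaryGroup {n : Type*} [Fintype n] [DecidableEq n]
    {U : Matrix n n ℂ} (hU : U ∈ unitaryGroup n ℂ) (hdet : U.det = 1) : star U = adjugate U := by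
  rw [← inv_eq_right_inv (mem_unitaryGroup_iff.mp hU), Matrix.inv_def, hdet, Ring.inverse_one,
    one_smul]

theorem dotPauli_add (u v : Fin 3 → ℝ) : dotPauli (u + v) = dotPauli u + dotPauli v := by
  simp only [dotPauli, Pi.add_apply, ofReal_add, add_smul]
  abel

theorem dotPauli_smul (a : ℝ) (v : Fin 3 → ℝ) : dotPauli (a • v) = (a : ℂ) • dotPauli v := by
  simp only [dotPauli, Pi.smul_apply, smul_eq_mul, ofReal_mul, smul_add, smul_smul]

theorem dotPauli_mul_dotPauli (u v : Fin 3 → ℝ) :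
    dotPauli u * dotPauli v = ((u ⬝ᵥ v : ℝ) : ℂ) • 1 + I • dotPauli (u ⨯₃ v) := by
  ext i j
  fin_cases i <;> fin_cases j <;>
    simp [dotPauli, pauliX, pauliY, pauliZ, cross_apply, dotProduct, Fin.sum_univ_three,
      mul_apply, one_apply] <;>
    ring_nf <;> simp only [I_sq] <;> ring

theorem dotPauli_mul_self_of_dotProduct_self_eq_one {v : Fin 3 → ℝ} (hv : v ⬝ᵥ v = 1) :
    dotPauli v * dotPauli v = 1 := by
  rw [dotPauli_mul_dotPauli, hv, cross_self, show dotPauli 0 = 0 by simp [dotPauli]]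
  simp

theorem dotPauli_mul_dotPauli_comm_of_dotProduct_eq_zero {u v : Fin 3 → ℝ} (huv : u ⬝ᵥ v = 0) :
    dotPauli v * dotPauli u = -(dotPauli u * dotPauli v) := by
  rw [dotPauli_mul_dotPauli, dotPauli_mul_dotPauli, dotProduct_comm, huv, ← cross_anticomm,
    show dotPauli (-(u ⨯₃ v)) = -dotPauli (u ⨯₃ v) by simpa using dotPauli_smul (-1) (u ⨯₃ v)]
  simp

theorem exists_eq_smul_one_add_I_smul_dotPauli {U : Matrix (Fin 2) (Fin 2) ℂ}
    (hU : U ∈ unitaryGroup (Fin 2) ℂ) (hdet : U.det = 1) :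
    ∃ (w : ℝ) (m : Fin 3 → ℝ), w ^ 2 + m ⬝ᵥ m = 1 ∧ U = (w : ℂ) • 1 + I • dotPauli m := by
  have hstar := star_eq_adjugate_of_mem_unitaryGroup hU hdet
  have h11 : U 1 1 = conj (U 0 0) := by
    simpa [adjugate_fin_two] using (congrFun₂ hstar 0 0).symm
  have h10 : U 1 0 = -conj (U 0 1) := by
    rw [← neg_eq_iff_eq_neg, eq_comm]
    simpa [adjugate_fin_two] using congrFun₂ hstar 1 0
  refine ⟨(U 0 0).re, ![(U 0 1).im, (U 0 1).re, (U 0 0).im], ?_, ?_⟩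
  · have hdet_re := congrArg re hdet
    simp only [det_fin_two, h11, h10, mul_neg, sub_neg_eq_add, add_re, mul_re, conj_re, conj_im,
      one_re] at hdet_re
    simp only [dotProduct, Fin.sum_univ_three, cons_val_zero, cons_val_one, cons_val]
    linear_combination hdet_re
  · ext i j
    fin_cases i <;> fin_cases j <;>
      simp [dotPauli, pauliX, pauliY, pauliZ, one_apply, h11, h10, Complex.ext_iff]

/-- Generalized Euler decomposition of SU(2) about two orthogonal axes. -/
theorem stmt10 (n₁ n₂ : Fin 3 → ℝ)
    (h1 : n₁ 0 ^ 2 + n₁ 1 ^ 2 + n₁ 2 ^ 2 = 1)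
    (h2 : n₂ 0 ^ 2 + n₂ 1 ^ 2 + n₂ 2 ^ 2 = 1)
    (horth : n₁ 0 * n₂ 0 + n₁ 1 * n₂ 1 + n₁ 2 * n₂ 2 = 0)
    (U : Matrix (Fin 2) (Fin 2) ℂ)
    (hU : U ∈ Matrix.unitaryGroup (Fin 2) ℂ) (hdet : U.det = 1) :
    ∃ α β γ : ℝ,
      U = NormedSpace.exp ((Complex.I * ↑α) • dotPauli n₁) *
          NormedSpace.exp ((Complex.I * ↑β) • dotPauli n₂) *
          NormedSpace.exp ((Complex.I * ↑γ) • dotPauli n₁) := by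
  have hn₁ : n₁ ⬝ᵥ n₁ = 1 := by simpa [dotProduct, Fin.sum_univ_three, sq] using h1
  have hn₂ : n₂ ⬝ᵥ n₂ = 1 := by simpa [dotProduct, Fin.sum_univ_three, sq] using h2
  have hn₁₂ : n₁ ⬝ᵥ n₂ = 0 := by simpa [dotProduct, Fin.sum_univ_three] using horth
  have hA := dotPauli_mul_self_of_dotProduct_self_eq_one hn₁
  obtain ⟨w, m, hwm, rfl⟩ := exists_eq_smul_one_add_I_smul_dotPauli hU hdet
  obtain ⟨α, β, γ, hw, hx, hy, hz⟩ := exists_euler_angles (w := w) (x := m ⬝ᵥ n₁)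
    (y := m ⬝ᵥ n₂) (z := m ⬝ᵥ n₁ ⨯₃ n₂)
    (by linear_combination hwm - dotProduct_self_eq_of_orthonormal hn₁ hn₂ hn₁₂ m)
  refine ⟨α, β, γ, ?_⟩
  rw [exp_I_mul_smul_of_mul_self_eq_one hA, exp_I_mul_smul_of_mul_self_eq_one hA,
    exp_I_mul_smul_of_mul_self_eq_one (dotPauli_mul_self_of_dotProduct_self_eq_one hn₂),
    euler_product_of_anticommute hA (dotPauli_mul_dotPauli_comm_of_dotProduct_eq_zero hn₁₂),
    ← hw, ← hx, ← hy, ← hz, dotPauli_mul_dotPauli, hn₁₂]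
  nth_rw 1 [eq_add_add_of_orthonormal hn₁ hn₂ hn₁₂ m]
  simp only [dotPauli_add, dotPauli_smul]
  module
end

section
/- Let γ be a complex number with |γ| = 1 that is not a root of unity, and for θ ∈ ℝ define the 2×2 matrix M_γ(θ) = [[cos θ, −γ̄ sin θ],[γ sin θ, cos θ]] (which lies in SU(2)). Then the subgroup of 2×2 complex matrices generated by the set {M_γ(θ) : θ ∈ ℝ} ∪ {M_γ(θ)ᵀ : θ ∈ ℝ} is dense in SU(2): its topological closure contains every 2×2 unitary matrix of determinant 1. -/
/-!
The products `M_γ(π/2) M_γ(π/2)ᵀ` and `M_γ(π/2)ᵀ M_γ(π/2)` are `diag(γ̄², γ²)` and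
`diag(γ², γ̄²)`. As `γ²` is not a root of unity, its integer powers are dense in the unit circle,
so the closure of the generated monoid contains the whole torus `diag(z, z̄)`, `|z| = 1`.
Every element of SU(2) factors as `diag(z, z̄) · M_γ(θ) · diag(w, w̄)` (Euler angles), and the
closure of a submonoid is again a submonoid.
-/

open Matrix

/-- The matrix `M_γ(θ) = [[cos θ, −γ̄ sin θ],[γ sin θ, cos θ]]`. -/
noncomputable def Mgam (γ : ℂ) (θ : ℝ) : Matrix (Fin 2) (Fin 2) ℂ :=
  !![(Real.cos θ : ℂ), -(starRingEnd ℂ) γ * ↑(Real.sin θ);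
     γ * ↑(Real.sin θ), (Real.cos θ : ℂ)]

open ComplexConjugate

theorem Circle.denseRange_zpow {u : Circle} (hu : ¬IsOfFinOrder u) :
    DenseRange (u ^ · : ℤ → Circle) := by
  have : Fact ((0 : ℝ) < 1) := ⟨one_pos⟩
  let e := AddCircle.homeomorphCircle (T := 1) one_ne_zero
  obtain ⟨a, rfl⟩ := e.surjective u
  have ha : addOrderOf a = 0 := by
    refine addOrderOf_eq_zero_iff.mpr fun h ↦ hu ?_
    obtain ⟨n, hn, hna⟩ := isOfFinAddOrder_iff_nsmul_eq_zero.mp h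
    refine isOfFinOrder_iff_pow_eq_one.mpr ⟨n, hn, ?_⟩
    simp [e, AddCircle.homeomorphCircle_apply, ← AddCircle.toCircle_nsmul, hna]
  convert e.surjective.denseRange.comp (AddCircle.denseRange_zsmul_iff.mpr ha) e.continuous
  simp [e, AddCircle.homeomorphCircle_apply, AddCircle.toCircle_zsmul]

theorem Circle.map_mem_closure_of_not_isOfFinOrder {M : Type*} [Monoid M] [TopologicalSpace M]
    {f : Circle →* M} (hf : Continuous f) {S : Submonoid M} {u : Circle}
    (hu : ¬IsOfFinOrder u) (hS : f u ∈ S) (hS' : f u⁻¹ ∈ S) (v : Circle) :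
    f v ∈ closure (S : Set M) := by
  have hzpow (n : ℤ) : f (u ^ n) ∈ S := by
    induction n using Int.induction_on with
    | zero => simp [S.one_mem]
    | succ n ih => rw [_root_.zpow_add_one, map_mul]; exact S.mul_mem ih hS
    | pred n ih => rw [_root_.zpow_sub_one, map_mul]; exact S.mul_mem ih hS'
  exact map_mem_closure hf ((Circle.denseRange_zpow hu).closure_range ▸ Set.mem_univ v)
    (Set.forall_mem_range.mpr hzpow)

noncomputable def diagConj : ℂ →* Matrix (Fin 2) (Fin 2) ℂ where
  toFun z := !![z, 0; 0, conj z]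
  map_one' := by simp [one_fin_two]
  map_mul' z w := by simp

theorem continuous_diagConj : Continuous diagConj :=
  continuous_matrix fun i j ↦ by
    fin_cases i <;> fin_cases j
    exacts [continuous_id, continuous_const, continuous_const, Complex.continuous_conj]

theorem diagConj_mem_closure {S : Submonoid (Matrix (Fin 2) (Fin 2) ℂ)} {γ : ℂ} (hγ : ‖γ‖ = 1)
    (hγ' : ¬IsOfFinOrder γ) (hS : diagConj (γ ^ 2) ∈ S) (hS' : diagConj (conj γ ^ 2) ∈ S)
    (v : Circle) : diagConj v ∈ closure (S : Set (Matrix (Fin 2) (Fin 2) ℂ)) := by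
  let c : Circle := ⟨γ, mem_sphere_zero_iff_norm.mpr hγ⟩
  have hc : ¬IsOfFinOrder (c ^ 2) := by
    rw [isOfFinOrder_pow, not_or]
    exact ⟨fun h ↦ hγ' (Circle.coeHom.isOfFinOrder h), two_ne_zero⟩
  refine Circle.map_mem_closure_of_not_isOfFinOrder (f := diagConj.comp Circle.coeHom)
    (continuous_diagConj.comp continuous_subtype_val) hc hS ?_ v
  change diagConj (((c ^ 2)⁻¹ : Circle) : ℂ) ∈ S
  rwa [Circle.coe_inv_eq_conj, Circle.coe_pow, map_pow]

theorem Mgam_transpose (γ : ℂ) (θ : ℝ) : (Mgam γ θ)ᵀ = Mgam (-conj γ) θ := by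
  ext i j
  fin_cases i <;> fin_cases j <;> simp [Mgam]

theorem Mgam_mul_transpose (γ : ℂ) :
    Mgam γ (Real.pi / 2) * (Mgam γ (Real.pi / 2))ᵀ = diagConj (conj γ ^ 2) := by
  rw [Mgam_transpose]
  simp [Mgam, diagConj, sq]

theorem Mgam_transpose_mul (γ : ℂ) :
    (Mgam γ (Real.pi / 2))ᵀ * Mgam γ (Real.pi / 2) = diagConj (γ ^ 2) := by
  rw [Mgam_transpose]
  simp [Mgam, diagConj, sq]

theorem diagConj_mul_Mgam_mul_diagConj (z w γ : ℂ) (θ : ℝ) :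
    diagConj z * Mgam γ θ * diagConj w =
      !![z * w * Real.cos θ, -(z * conj w) * conj γ * Real.sin θ;
        conj (z * conj w) * γ * Real.sin θ, conj (z * w) * Real.cos θ] := by
  ext i j
  fin_cases i <;> fin_cases j <;> simp [Mgam, diagConj] <;> ring

theorem exists_eq_of_mem_unitaryGroup_of_det_eq_one {U : Matrix (Fin 2) (Fin 2) ℂ}
    (hU : U ∈ unitaryGroup (Fin 2) ℂ) (hdet : U.det = 1) :
    ∃ a b : ℂ, U = !![a, b; -conj b, conj a] ∧ ‖a‖ ^ 2 + ‖b‖ ^ 2 = 1 := by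
  have hstar : star U = adjugate U := by
    rw [← inv_eq_left_inv (mem_unitaryGroup_iff'.mp hU), inv_def, hdet, Ring.inverse_one,
      one_smul]
  rw [adjugate_fin_two, ← Matrix.ext_iff] at hstar
  have h10 : U 1 0 = -conj (U 0 1) := by simpa using congrArg conj (hstar 0 1)
  have h11 : U 1 1 = conj (U 0 0) := by simpa using congrArg conj (hstar 1 1)
  refine ⟨U 0 0, U 0 1, ?_, ?_⟩
  · rw [← h10, ← h11]
    exact eta_fin_two U
  · rw [det_fin_two, h10, h11, mul_neg, sub_neg_eq_add, Complex.mul_conj', Complex.mul_conj']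
      at hdet
    exact_mod_cast hdet

theorem exists_eq_diagConj_mul_Mgam_mul_diagConj {γ : ℂ} (hγ : ‖γ‖ = 1) {a b : ℂ}
    (hab : ‖a‖ ^ 2 + ‖b‖ ^ 2 = 1) :
    ∃ (z w : Circle) (θ : ℝ), !![a, b; -conj b, conj a] = diagConj z * Mgam γ θ * diagConj w := by
  set θ := Real.arccos ‖a‖
  have hcos : Real.cos θ = ‖a‖ :=
    Real.cos_arccos (by linarith [norm_nonneg a]) (by nlinarith [norm_nonneg a, norm_nonneg b])
  have hsin : Real.sin θ = ‖b‖ := by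
    rw [Real.sin_arccos, ← hab, add_sub_cancel_left, Real.sqrt_sq (norm_nonneg b)]
  set α := Complex.arg a
  set β := Complex.arg (-γ * b)
  have ha : ‖a‖ * Complex.exp (α * Complex.I) = a := Complex.norm_mul_exp_arg_mul_I a
  have hb : ‖b‖ * Complex.exp (β * Complex.I) = -γ * b := by
    have h := Complex.norm_mul_exp_arg_mul_I (-γ * b)
    rwa [norm_mul, norm_neg, hγ, one_mul] at h
  have hγγ : conj γ * γ = 1 := by
    rw [mul_comm, Complex.mul_conj', hγ]
    norm_num
  -- `z w` and `z w̄` must carry the phases of `a` and of `-γ b`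
  refine ⟨Circle.exp ((α + β) / 2), Circle.exp ((α - β) / 2), θ, ?_⟩
  have hzw : (Circle.exp ((α + β) / 2) : ℂ) * Circle.exp ((α - β) / 2) =
      Complex.exp (α * Complex.I) := by
    rw [← Circle.coe_mul, ← Circle.exp_add, Circle.coe_exp]
    ring_nf
  have hzw' : (Circle.exp ((α + β) / 2) : ℂ) * conj (Circle.exp ((α - β) / 2) : ℂ) =
      Complex.exp (β * Complex.I) := by
    rw [← Circle.coe_inv_eq_conj, ← Circle.coe_mul, ← Circle.exp_neg, ← Circle.exp_add,
      Circle.coe_exp]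
    ring_nf
  rw [diagConj_mul_Mgam_mul_diagConj, hzw, hzw', hcos, hsin]
  ext i j
  fin_cases i <;> fin_cases j <;> dsimp
  · linear_combination -ha
  · linear_combination conj γ * hb - b * hγγ
  · have hb' := congrArg conj hb
    simp only [map_mul, map_neg, Complex.conj_ofReal] at hb'
    linear_combination -γ * hb' + conj b * hγγ
  · have ha' := congrArg conj ha
    simp only [map_mul, Complex.conj_ofReal] at ha'
    linear_combination -ha'

/-- If `|γ| = 1` and `γ` is not a root of unity, the group generated by the matrices
`M_γ(θ)` and their transposes is dense in SU(2).  (This generated monoid is a group,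
as `M_γ(θ)⁻¹ = M_γ(−θ)`.) -/
theorem stmt11 (γ : ℂ) (hγ : ‖γ‖ = 1)
    (hroot : ¬ ∃ n : ℕ, 0 < n ∧ γ ^ n = 1)
    (U : Matrix (Fin 2) (Fin 2) ℂ)
    (hU : U ∈ Matrix.unitaryGroup (Fin 2) ℂ) (hdet : U.det = 1) :
    U ∈ closure ((Submonoid.closure
      ({M | ∃ θ : ℝ, M = Mgam γ θ} ∪ {M | ∃ θ : ℝ, M = (Mgam γ θ)ᵀ}) :
        Submonoid (Matrix (Fin 2) (Fin 2) ℂ)) : Set (Matrix (Fin 2) (Fin 2) ℂ)) := by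
  set S : Submonoid (Matrix (Fin 2) (Fin 2) ℂ) :=
    Submonoid.closure ({M | ∃ θ : ℝ, M = Mgam γ θ} ∪ {M | ∃ θ : ℝ, M = (Mgam γ θ)ᵀ})
  have hM (θ : ℝ) : Mgam γ θ ∈ S := Submonoid.subset_closure (Or.inl ⟨θ, rfl⟩)
  have hMt (θ : ℝ) : (Mgam γ θ)ᵀ ∈ S := Submonoid.subset_closure (Or.inr ⟨θ, rfl⟩)
  have htorus (v : Circle) : diagConj v ∈ closure (S : Set _) :=
    diagConj_mem_closure hγ (fun h ↦ hroot h.exists_pow_eq_one)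
      (Mgam_transpose_mul γ ▸ S.mul_mem (hMt _) (hM _))
      (Mgam_mul_transpose γ ▸ S.mul_mem (hM _) (hMt _)) v
  obtain ⟨a, b, rfl, hab⟩ := exists_eq_of_mem_unitaryGroup_of_det_eq_one hU hdet
  obtain ⟨z, w, θ, hzw⟩ := exists_eq_diagConj_mul_Mgam_mul_diagConj hγ hab
  rw [hzw, ← S.coe_topologicalClosure]
  exact mul_mem (mul_mem (htorus z) (S.le_topologicalClosure (hM θ))) (htorus w)
end

section
/- The following exact 8×8 matrix identity holds (decomposition of the Toffoli gate): Λ₂(σ_x) = Λ^{1→3}(V) · (CNOT ⊗ I₂) · (I₂ ⊗ Λ₁(V⁻¹)) · (CNOT ⊗ I₂) · (I₂ ⊗ Λ₁(V)), where V = σ_x^{1/2} = H σ_z^{1/2} H, Λ^{1→3}(V) = diag(I₄, I₂ ⊗ V) is the gate applying V to the third qubit controlled on the first qubit, Λ₁(W) = diag(I₂, W), CNOT = Λ₁(σ_x), and Λ₂(σ_x) = diag(I₆, σ_x) is the Toffoli gate. -/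
open Matrix

noncomputable def sigmaX : Matrix (Fin 2) (Fin 2) ℂ := !![0, 1; 1, 0]
noncomputable def sigmaZhalf : Matrix (Fin 2) (Fin 2) ℂ := !![1, 0; 0, Complex.I]
noncomputable def sigmaZhalfInv : Matrix (Fin 2) (Fin 2) ℂ := !![1, 0; 0, -Complex.I]
noncomputable def Hmat : Matrix (Fin 2) (Fin 2) ℂ :=
  (Real.sqrt 2 : ℂ)⁻¹ • !![1, 1; 1, -1]

/-- `V = σ_x^{1/2} = H σ_z^{1/2} H`. -/
noncomputable def Vgate : Matrix (Fin 2) (Fin 2) ℂ := Hmat * sigmaZhalf * Hmat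

/-- `V⁻¹ = σ_x^{−1/2} = H σ_z^{−1/2} H`. -/
noncomputable def VgateInv : Matrix (Fin 2) (Fin 2) ℂ := Hmat * sigmaZhalfInv * Hmat

/-- The Toffoli gate `Λ₂(σ_x) = diag(I₆, σ_x)`. -/
noncomputable def toffoli :
    Matrix (Fin 2 × Fin 2 × Fin 2) (Fin 2 × Fin 2 × Fin 2) ℂ :=
  Matrix.of fun p q =>
    if p.1 = q.1 ∧ p.2.1 = q.2.1 then
      (if p.1 = 1 ∧ p.2.1 = 1 then sigmaX p.2.2 q.2.2
       else (if p.2.2 = q.2.2 then 1 else 0))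
    else 0

/-- `Λ^{1→3}(W)`: apply `W` to the third qubit, controlled on the first qubit. -/
noncomputable def ctrl13 (W : Matrix (Fin 2) (Fin 2) ℂ) :
    Matrix (Fin 2 × Fin 2 × Fin 2) (Fin 2 × Fin 2 × Fin 2) ℂ :=
  Matrix.of fun p q =>
    if p.1 = q.1 ∧ p.2.1 = q.2.1 then
      (if p.1 = 1 then W p.2.2 q.2.2 else (if p.2.2 = q.2.2 then 1 else 0))
    else 0

/-- `CNOT ⊗ I₂`: CNOT with control qubit 1 and target qubit 2. -/
noncomputable def cnot12 :
    Matrix (Fin 2 × Fin 2 × Fin 2) (Fin 2 × Fin 2 × Fin 2) ℂ :=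
  Matrix.of fun p q =>
    (if p.1 = q.1 ∧ p.2.1 = q.1 + q.2.1 then (1 : ℂ) else 0) *
      (if p.2.2 = q.2.2 then 1 else 0)

/-- `I₂ ⊗ Λ₁(W)`: apply `W` to the third qubit, controlled on the second qubit. -/
noncomputable def ctrl23 (W : Matrix (Fin 2) (Fin 2) ℂ) :
    Matrix (Fin 2 × Fin 2 × Fin 2) (Fin 2 × Fin 2 × Fin 2) ℂ :=
  Matrix.of fun p q =>
    (if p.1 = q.1 then (1 : ℂ) else 0) *
      (if p.2.1 = q.2.1 then
        (if p.2.1 = 0 then (if p.2.2 = q.2.2 then 1 else 0) else W p.2.2 q.2.2)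
       else 0)

/-! Every factor is block diagonal with respect to the computational basis of the first two qubits,
and conjugation by `CNOT ⊗ I₂` replaces the second control bit `b` by `a ⊕ b`. On the block
`(a, b)` the product therefore applies `V^a V^{-(a ⊕ b)} V^b` to the third qubit; as
`a + b - (a ⊕ b) = 2ab`, this is `V² = σ_x` for `a = b = 1` and the identity otherwise. Finally
`V² = H σ_z H = σ_x` because `H² = 1`. -/

section ControlledGate

variable {α β γ R : Type*}

def controlledGate [Zero R] [DecidableEq α] [DecidableEq β] (U : α → β → Matrix γ γ R) :
    Matrix (α × β × γ) (α × β × γ) R :=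
  Matrix.of fun p q => if p.1 = q.1 ∧ p.2.1 = q.2.1 then U p.1 p.2.1 p.2.2 q.2.2 else 0

theorem controlledGate_mul [Fintype α] [Fintype β] [Fintype γ] [DecidableEq α] [DecidableEq β]
    [NonUnitalNonAssocSemiring R] (U U' : α → β → Matrix γ γ R) :
    controlledGate U * controlledGate U' = controlledGate fun a b => U a b * U' a b := by
  ext ⟨a, b, c⟩ ⟨a', b', c'⟩
  rcases eq_or_ne a a' with rfl | ha <;> rcases eq_or_ne b b' with rfl | hb <;>
    simp [controlledGate, mul_apply, Fintype.sum_prod_type, ite_and, *]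

end ControlledGate

section CNOT

variable (M : Matrix (Fin 2 × Fin 2 × Fin 2) (Fin 2 × Fin 2 × Fin 2) ℂ)

theorem cnot12_mul_apply (p q : Fin 2 × Fin 2 × Fin 2) :
    (cnot12 * M) p q = M (p.1, p.1 + p.2.1, p.2.2) q := by
  obtain ⟨a, b, c⟩ := p
  fin_cases a <;> fin_cases b <;> simp [cnot12, mul_apply, Fintype.sum_prod_type, ite_and]

theorem mul_cnot12_apply (p q : Fin 2 × Fin 2 × Fin 2) :
    (M * cnot12) p q = M p (q.1, q.1 + q.2.1, q.2.2) := by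
  obtain ⟨a, b, c⟩ := q
  simp [cnot12, mul_apply, Fintype.sum_prod_type, ite_and]

end CNOT

theorem cnot12_mul_controlledGate_mul_cnot12 (U : Fin 2 → Fin 2 → Matrix (Fin 2) (Fin 2) ℂ) :
    cnot12 * controlledGate U * cnot12 = controlledGate fun a b => U a (a + b) := by
  ext ⟨a, b, c⟩ ⟨a', b', c'⟩
  by_cases h : a = a' <;> simp [mul_cnot12_apply, cnot12_mul_apply, controlledGate, h]

theorem toffoli_eq_controlledGate :
    toffoli = controlledGate fun a b => if a = 1 ∧ b = 1 then sigmaX else 1 := by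
  ext ⟨a, b, c⟩ ⟨a', b', c'⟩
  simp only [toffoli, controlledGate, of_apply, apply_ite (fun W : Matrix _ _ ℂ => W c c'),
    one_apply]

theorem ctrl13_eq_controlledGate (W : Matrix (Fin 2) (Fin 2) ℂ) :
    ctrl13 W = controlledGate fun a _ => if a = 1 then W else 1 := by
  ext ⟨a, b, c⟩ ⟨a', b', c'⟩
  simp only [ctrl13, controlledGate, of_apply, apply_ite (fun W : Matrix _ _ ℂ => W c c'),
    one_apply]

theorem ctrl23_eq_controlledGate (W : Matrix (Fin 2) (Fin 2) ℂ) :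
    ctrl23 W = controlledGate fun _ b => if b = 0 then 1 else W := by
  ext ⟨a, b, c⟩ ⟨a', b', c'⟩
  by_cases h : a = a' <;>
    simp [ctrl23, controlledGate, h, one_apply, apply_ite (fun W : Matrix _ _ ℂ => W c c')]

def sigmaZ : Matrix (Fin 2) (Fin 2) ℂ := !![1, 0; 0, -1]

theorem inv_sqrt_two_mul_self : ((√2 : ℝ) : ℂ)⁻¹ * ((√2 : ℝ) : ℂ)⁻¹ = 2⁻¹ := by
  rw [← mul_inv, ← Complex.ofReal_mul, Real.mul_self_sqrt zero_le_two, Complex.ofReal_ofNat]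

theorem Hmat_mul_Hmat : Hmat * Hmat = 1 := by
  rw [Hmat, smul_mul_smul_comm, inv_sqrt_two_mul_self]
  ext i j; fin_cases i <;> fin_cases j <;> norm_num

theorem Hmat_mul_sigmaZ_mul_Hmat : Hmat * sigmaZ * Hmat = sigmaX := by
  rw [Hmat, smul_mul_assoc, smul_mul_smul_comm, inv_sqrt_two_mul_self, sigmaZ]
  ext i j; fin_cases i <;> fin_cases j <;> norm_num [sigmaX]

theorem sigmaZhalf_mul_self : sigmaZhalf * sigmaZhalf = sigmaZ := by
  simp [sigmaZhalf, sigmaZ]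

theorem sigmaZhalf_mul_sigmaZhalfInv : sigmaZhalf * sigmaZhalfInv = 1 := by
  simp [sigmaZhalf, sigmaZhalfInv, one_fin_two]

theorem sigmaZhalfInv_mul_sigmaZhalf : sigmaZhalfInv * sigmaZhalf = 1 := by
  simp [sigmaZhalf, sigmaZhalfInv, one_fin_two]

theorem Hmat_conj_mul_Hmat_conj (P Q : Matrix (Fin 2) (Fin 2) ℂ) :
    Hmat * P * Hmat * (Hmat * Q * Hmat) = Hmat * (P * Q) * Hmat := by
  simp only [← mul_assoc]
  rw [mul_assoc (Hmat * P), Hmat_mul_Hmat, mul_one]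

theorem Vgate_mul_self : Vgate * Vgate = sigmaX := by
  rw [Vgate, Hmat_conj_mul_Hmat_conj, sigmaZhalf_mul_self, Hmat_mul_sigmaZ_mul_Hmat]

theorem Vgate_mul_VgateInv : Vgate * VgateInv = 1 := by
  rw [Vgate, VgateInv, Hmat_conj_mul_Hmat_conj, sigmaZhalf_mul_sigmaZhalfInv, mul_one,
    Hmat_mul_Hmat]

theorem VgateInv_mul_Vgate : VgateInv * Vgate = 1 := by
  rw [Vgate, VgateInv, Hmat_conj_mul_Hmat_conj, sigmaZhalfInv_mul_sigmaZhalf, mul_one,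
    Hmat_mul_Hmat]

/-- Decomposition of the Toffoli gate:
`Λ₂(σ_x) = Λ^{1→3}(V) (CNOT⊗I₂) (I₂⊗Λ₁(V⁻¹)) (CNOT⊗I₂) (I₂⊗Λ₁(V))`. -/
theorem stmt18 :
    toffoli =
      ctrl13 Vgate * cnot12 * ctrl23 VgateInv * cnot12 * ctrl23 Vgate := by
  rw [mul_assoc (ctrl13 Vgate), mul_assoc (ctrl13 Vgate), ctrl23_eq_controlledGate VgateInv,
    cnot12_mul_controlledGate_mul_cnot12, ctrl13_eq_controlledGate, ctrl23_eq_controlledGate,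
    controlledGate_mul, controlledGate_mul, toffoli_eq_controlledGate]
  congr 1; funext a b
  fin_cases a <;> fin_cases b <;> simp [Vgate_mul_self, Vgate_mul_VgateInv, VgateInv_mul_Vgate]
end
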